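/- Let F be a finite-dimensional complex vector space with two inner products ⟨·,·⟩ and [·,·], and let Γ and Γ' be two bases each orthonormal for [·,·] and orthogonal for ⟨·,·⟩. Then ∑_{γ∈Γ} √⟨γ,γ⟩ = ∑_{γ'∈Γ'} √⟨γ',γ'⟩. -/

import Mathlib

/-!
Let `T` be the operator relating the two forms, `[y, T x] = ⟨y, x⟩`. In any basis that is
orthonormal for `[·,·]`, the matrix of `T` is the Gram matrix of `⟨·,·⟩`; if the basis is also
orthogonal for `⟨·,·⟩`, that matrix is diagonal with entries `⟨γ,γ⟩`. Hence the multiset of the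
`⟨γ,γ⟩` is the multiset of roots of the characteristic polynomial of `T`, which does not depend on
the basis, and so neither does any sum `∑ f ⟨γ,γ⟩`.
-/

open scoped InnerProductSpace ComplexConjugate

theorem Matrix.roots_charpoly_diagonal {n R : Type*} [Fintype n] [DecidableEq n] [CommRing R]
    [IsDomain R] (d : n → R) :
    (Matrix.diagonal d).charpoly.roots = Finset.univ.val.map d := by
  rw [Matrix.charpoly_diagonal, Polynomial.roots_prod _ _ (by
    simp [Finset.prod_ne_zero_iff, Polynomial.X_sub_C_ne_zero])]
  simp

theorem sum_comp_eq_of_charpoly_diagonal_eq {n n' R M : Type*} [Fintype n] [DecidableEq n]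
    [Fintype n'] [DecidableEq n'] [CommRing R] [IsDomain R] [AddCommMonoid M]
    {d : n → R} {d' : n' → R} (h : (Matrix.diagonal d).charpoly = (Matrix.diagonal d').charpoly)
    (f : R → M) : ∑ i, f (d i) = ∑ i, f (d' i) := by
  have hroots := congrArg Polynomial.roots h
  rw [Matrix.roots_charpoly_diagonal, Matrix.roots_charpoly_diagonal] at hroots
  simpa only [Finset.sum_eq_multiset_sum, Multiset.map_map, Function.comp_def] using
    congrArg (fun s ↦ (s.map f).sum) hroots

theorem Matrix.gram_eq_diagonal {𝕜 E n : Type*} [RCLike 𝕜] [NormedAddCommGroup E]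
    [InnerProductSpace 𝕜 E] [DecidableEq n] {v : n → E}
    (hv : ∀ i j, i ≠ j → ⟪v i, v j⟫_𝕜 = 0) :
    Matrix.gram 𝕜 v = Matrix.diagonal fun i ↦ ⟪v i, v i⟫_𝕜 := by
  ext i j
  rcases eq_or_ne i j with rfl | hij
  · simp [Matrix.gram_apply]
  · simp [Matrix.gram_apply, hv i j hij, hij]

section RelatingOperator

variable {𝕜 E ι ι' : Type*} [RCLike 𝕜] [NormedAddCommGroup E] [InnerProductSpace 𝕜 E]
  {B : E →ₗ⋆[𝕜] E →ₗ[𝕜] 𝕜}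

theorem Module.Basis.sesqForm_basis_left [DecidableEq ι] (b : Module.Basis ι 𝕜 E)
    (hb : ∀ i j, B (b i) (b j) = if i = j then 1 else 0) (i : ι) :
    B (b i) = b.coord i :=
  b.ext fun j ↦ by simp [hb, Finsupp.single_apply, eq_comm]

variable [Fintype ι]

/-- `T x = ∑ j, ⟪b j, x⟫ • b j`. When `b` is `B`-orthonormal this is the operator with
`B y (T x) = ⟪y, x⟫`, so it does not depend on `b`. -/
noncomputable def Module.Basis.relatingOperator (b : Module.Basis ι 𝕜 E) : E →ₗ[𝕜] E :=
  b.equivFun.symm.toLinearMap ∘ₗ LinearMap.pi fun j ↦ innerₛₗ 𝕜 (b j)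

theorem Module.Basis.repr_relatingOperator (b : Module.Basis ι 𝕜 E) (x : E) (j : ι) :
    b.repr (b.relatingOperator x) j = ⟪b j, x⟫_𝕜 := by
  rw [Module.Basis.relatingOperator, LinearMap.comp_apply, LinearEquiv.coe_coe,
    ← b.equivFun_apply, LinearEquiv.apply_symm_apply, LinearMap.pi_apply, innerₛₗ_apply_apply]

variable [DecidableEq ι] [Fintype ι'] [DecidableEq ι']

theorem Module.Basis.sesqForm_relatingOperator (b : Module.Basis ι 𝕜 E)
    (hb : ∀ i j, B (b i) (b j) = if i = j then 1 else 0) (y x : E) :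
    B y (b.relatingOperator x) = ⟪y, x⟫_𝕜 := by
  have h : B.flip (b.relatingOperator x) = (innerₛₗ 𝕜).flip x :=
    b.ext fun i ↦ by simp [b.sesqForm_basis_left hb, b.repr_relatingOperator]
  exact LinearMap.congr_fun h y

theorem Module.Basis.toMatrix_relatingOperator (b : Module.Basis ι 𝕜 E)
    (hb : ∀ i j, B (b i) (b j) = if i = j then 1 else 0) (b' : Module.Basis ι' 𝕜 E)
    (hb' : ∀ i j, B (b' i) (b' j) = if i = j then 1 else 0) :
    LinearMap.toMatrix b' b' b.relatingOperator = Matrix.gram 𝕜 b' := by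
  ext i j
  rw [LinearMap.toMatrix_apply, ← b'.coord_apply, ← b'.sesqForm_basis_left hb',
    b.sesqForm_relatingOperator hb, Matrix.gram_apply]

theorem Module.Basis.charpoly_gram_eq (b : Module.Basis ι 𝕜 E)
    (hb : ∀ i j, B (b i) (b j) = if i = j then 1 else 0) (b' : Module.Basis ι' 𝕜 E)
    (hb' : ∀ i j, B (b' i) (b' j) = if i = j then 1 else 0) :
    (Matrix.gram 𝕜 b).charpoly = (Matrix.gram 𝕜 b').charpoly := by
  have := Module.Finite.of_basis b
  rw [← b.toMatrix_relatingOperator hb b hb, ← b.toMatrix_relatingOperator hb b' hb',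
    LinearMap.charpoly_toMatrix, LinearMap.charpoly_toMatrix]

end RelatingOperator

theorem sigma_independent_of_basis_general
    (F : Type*) [NormedAddCommGroup F] [InnerProductSpace ℂ F]
    (B : F → F → ℂ)
    (hB_add : ∀ x y z : F, B x (y + z) = B x y + B x z)
    (hB_smul : ∀ (c : ℂ) (x y : F), B x (c • y) = c * B x y)
    (hB_herm : ∀ x y : F, B y x = conj (B x y))
    (ι ι' : Type*) [Fintype ι] [Fintype ι'] [DecidableEq ι] [DecidableEq ι']
    (b : Module.Basis ι ℂ F) (b' : Module.Basis ι' ℂ F)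
    (hb_on : ∀ i j, B (b i) (b j) = if i = j then 1 else 0)
    (hb'_on : ∀ i j, B (b' i) (b' j) = if i = j then 1 else 0)
    (hb_orth : ∀ i j, i ≠ j → ⟪b i, b j⟫_ℂ = 0)
    (hb'_orth : ∀ i j, i ≠ j → ⟪b' i, b' j⟫_ℂ = 0) :
    ∑ i, Real.sqrt (⟪b i, b i⟫_ℂ).re = ∑ i, Real.sqrt (⟪b' i, b' i⟫_ℂ).re := by
  -- `B` is conjugate-linear in its first argument because it is hermitian.
  let Bₛ : F →ₗ⋆[ℂ] F →ₗ[ℂ] ℂ := LinearMap.mk₂'ₛₗ _ _ B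
    (fun x y z ↦ by rw [hB_herm, hB_add, map_add, ← hB_herm, ← hB_herm])
    (fun c x y ↦ by rw [hB_herm, hB_smul, map_mul, ← hB_herm, smul_eq_mul])
    hB_add hB_smul
  have hcharpoly := b.charpoly_gram_eq (B := Bₛ) hb_on b' hb'_on
  rw [Matrix.gram_eq_diagonal hb_orth, Matrix.gram_eq_diagonal hb'_orth] at hcharpoly
  exact sum_comp_eq_of_charpoly_diagonal_eq hcharpoly fun c ↦ Real.sqrt c.re

/-- Let `F` be a finite-dimensional complex vector space with two inner products
`⟨·,·⟩` and `[·,·]` (the latter given as a positive-definite hermitian form `B`),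
and let `Γ`, `Γ'` be two bases, each orthonormal for `[·,·]` and orthogonal for
`⟨·,·⟩`.  Then `∑_{γ∈Γ} √⟨γ,γ⟩ = ∑_{γ'∈Γ'} √⟨γ',γ'⟩`. -/
theorem sigma_independent_of_basis
    (F : Type*) [NormedAddCommGroup F] [InnerProductSpace ℂ F]
    [FiniteDimensional ℂ F]
    (B : F → F → ℂ)
    (hB_add : ∀ x y z : F, B x (y + z) = B x y + B x z)
    (hB_smul : ∀ (c : ℂ) (x y : F), B x (c • y) = c * B x y)
    (hB_herm : ∀ x y : F, B y x = conj (B x y))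
    (hB_pos : ∀ x : F, x ≠ 0 → 0 < (B x x).re)
    (ι ι' : Type*) [Fintype ι] [Fintype ι'] [DecidableEq ι] [DecidableEq ι']
    (b : Module.Basis ι ℂ F) (b' : Module.Basis ι' ℂ F)
    (hb_on : ∀ i j, B (b i) (b j) = if i = j then 1 else 0)
    (hb'_on : ∀ i j, B (b' i) (b' j) = if i = j then 1 else 0)
    (hb_orth : ∀ i j, i ≠ j → ⟪b i, b j⟫_ℂ = 0)
    (hb'_orth : ∀ i j, i ≠ j → ⟪b' i, b' j⟫_ℂ = 0) :
    ∑ i, Real.sqrt (⟪b i, b i⟫_ℂ).re = ∑ i, Real.sqrt (⟪b' i, b' i⟫_ℂ).re :=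
  sigma_independent_of_basis_general F B hB_add hB_smul hB_herm ι ι' b b' hb_on hb'_on hb_orth
    hb'_orth
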